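/- Assume GRH. For all integers q ≥ 1, all integers a with gcd(a,q)=1, all real x ≥ 1 and all T ≥ 0: F_q(x,T) = ∫_{−∞}^{∞} |Σ(x,T,v)|²·e^{−2|v|} dv. In particular F_q(x,T) is real and nonnegative. -/

import Mathlib

open Complex MeasureTheory
open scoped Classical

noncomputable section

def zmult {q : ℕ} (χ : DirichletCharacter ℂ q) (γ : ℝ) : ℕ :=
  if hq : q = 0 then 0
  else
    haveI : NeZero q := ⟨hq⟩
    if h : AnalyticAt ℂ (DirichletCharacter.LFunction χ) (1 / 2 + γ * Complex.I)
    then (analyticOrderAt (DirichletCharacter.LFunction χ) (1 / 2 + γ * Complex.I)).toNat else 0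

def GRH : Prop :=
  ∀ (q : ℕ) [NeZero q] (χ : DirichletCharacter ℂ q) (s : ℂ),
    DirichletCharacter.LFunction χ s = 0 → 0 < s.re → s.re < 1 → s.re = 1 / 2

def Wt (u : ℝ) : ℝ := 4 / (4 + u ^ 2)

def Gpair {q : ℕ} (χ₁ χ₂ : DirichletCharacter ℂ q) (x T : ℝ) : ℂ :=
  ∑' p : ℝ × ℝ,
    if |p.1| ≤ T ∧ |p.2| ≤ T then
      ((zmult χ₁ p.1 * zmult χ₂ p.2 : ℕ) : ℂ) *
        (x : ℂ) ^ (Complex.I * ((p.1 - p.2 : ℝ) : ℂ)) * ((Wt (p.1 - p.2) : ℝ) : ℂ)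
    else 0

def Fq (q a : ℕ) (x T : ℝ) : ℂ :=
  if hq : q = 0 then 0
  else
    haveI : NeZero q := ⟨hq⟩
    haveI : Fintype (DirichletCharacter ℂ q) := Fintype.ofFinite _
    ∑ χ₁ : DirichletCharacter ℂ q, ∑ χ₂ : DirichletCharacter ℂ q,
      (starRingEnd ℂ) (χ₁ (a : ZMod q)) * χ₂ (a : ZMod q) * Gpair χ₁ χ₂ x T

def psi (x : ℝ) (q a : ℕ) : ℝ :=
  ∑ n ∈ Finset.Icc 1 ⌊x⌋₊,
    if (n : ZMod q) = (a : ZMod q) then ArithmeticFunction.vonMangoldt n else 0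

/-- `S(x) = x⁻² Σ_{n≤x, n≡a} n Λ(n)² + x² Σ_{n>x, n≡a} Λ(n)²/n³`. -/
def Sfun (q a : ℕ) (x : ℝ) : ℝ :=
  (1 / x ^ 2) * (∑ n ∈ Finset.Icc 1 ⌊x⌋₊,
      if (n : ZMod q) = (a : ZMod q) then (n : ℝ) * (ArithmeticFunction.vonMangoldt n) ^ 2 else 0)
  + x ^ 2 * ∑' n : ℕ,
      (if x < (n : ℝ) ∧ (n : ZMod q) = (a : ZMod q)
       then (ArithmeticFunction.vonMangoldt n) ^ 2 / (n : ℝ) ^ 3 else 0)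

/-- `R₁(x,t)`. -/
def R1 (q a : ℕ) (x t : ℝ) : ℂ :=
  -((Nat.totient q : ℂ) / ((Real.sqrt x : ℝ) : ℂ)) *
    ((∑ n ∈ Finset.Icc 1 ⌊x⌋₊,
        if (n : ZMod q) = (a : ZMod q) then
          ((ArithmeticFunction.vonMangoldt n : ℝ) : ℂ) *
            ((x / n : ℝ) : ℂ) ^ ((-(1 / 2) : ℂ) + (t : ℂ) * Complex.I)
        else 0)
      + ∑' n : ℕ,
        (if x < (n : ℝ) ∧ (n : ZMod q) = (a : ZMod q) then
          ((ArithmeticFunction.vonMangoldt n : ℝ) : ℂ) *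
            ((x / n : ℝ) : ℂ) ^ (((3 / 2) : ℂ) + (t : ℂ) * Complex.I)
        else 0))

/-- `Σ(x,T,v) = Σ_χ conj(χ(a)) Σ_{|γ|≤T} x^{iγ} e^{ivγ}`. -/
def Sig (q a : ℕ) (x T v : ℝ) : ℂ :=
  if hq : q = 0 then 0
  else
    haveI : NeZero q := ⟨hq⟩
    haveI : Fintype (DirichletCharacter ℂ q) := Fintype.ofFinite _
    ∑ χ : DirichletCharacter ℂ q, (starRingEnd ℂ) (χ (a : ZMod q)) *
      ∑' γ : ℝ,
        (if |γ| ≤ T then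
          ((zmult χ γ : ℕ) : ℂ) * (x : ℂ) ^ (Complex.I * (γ : ℂ)) *
            Complex.exp (Complex.I * (v : ℂ) * (γ : ℂ))
        else 0)

/-- `Σ_χ conj(χ(a)) Σ_{|γ|≤Z} x^{1/2+iγ}/(1/2+iγ)`. -/
def Zsum (q a : ℕ) (x Z : ℝ) : ℂ :=
  if hq : q = 0 then 0
  else
    haveI : NeZero q := ⟨hq⟩
    haveI : Fintype (DirichletCharacter ℂ q) := Fintype.ofFinite _
    ∑ χ : DirichletCharacter ℂ q, (starRingEnd ℂ) (χ (a : ZMod q)) *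
      ∑' γ : ℝ,
        (if |γ| ≤ Z then
          ((zmult χ γ : ℕ) : ℂ) * (x : ℂ) ^ ((1 / 2 : ℂ) + (γ : ℂ) * Complex.I) /
            ((1 / 2 : ℂ) + (γ : ℂ) * Complex.I)
        else 0)

/-- `I(x,q,T) = (1/φ(q)) Σ_χ conj(χ(a)) Σ_{|γ|≤T} x^{1/2+iγ}/(1/2+iγ)`. -/
def Ifun (x : ℝ) (q a : ℕ) (T : ℝ) : ℂ :=
  ((Nat.totient q : ℂ))⁻¹ * Zsum q a x T

/-- The pair correlation conjecture at level `ε'`. -/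
def PairCorrConj (ε' : ℝ) : Prop :=
  ∃ C' > 0, ∃ x₀' : ℝ, ∀ x : ℝ, x₀' ≤ x →
    ∀ q : ℕ, 1 ≤ q → (q : ℝ) ≤ x ^ (1 - ε') →
    ∀ a : ℕ, Nat.gcd a q = 1 →
    ∀ T : ℝ, x ^ ε' ≤ T → T < x →
    ‖Fq q a x T‖ ≤ C' * (Nat.totient q : ℝ) * T * x ^ ε'

/-- The weak pair correlation conjecture at level `ε'` with weight `g`. -/
def WeakPairCorrConj (g : ℕ → ℝ) (ε' : ℝ) : Prop :=
  ∃ C' > 0, ∃ x₀' : ℝ, ∀ x : ℝ, x₀' ≤ x →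
    ∀ q : ℕ, 1 ≤ q → (q : ℝ) ≤ x ^ (1 - ε') →
    ∀ a : ℕ, Nat.gcd a q = 1 →
    ∀ T : ℝ, x ^ ε' ≤ T → T < x →
    ‖Fq q a x T‖ ≤ C' * (Nat.totient q : ℝ) * g q * T * x ^ ε'

open Set Filter

lemma integrable_exp_neg_two_abs : Integrable (fun v : ℝ => Real.exp (-2 * |v|)) := by
  have h1 : IntegrableOn (fun v : ℝ => Real.exp (-2 * |v|)) (Ioi 0) := by
    refine (exp_neg_integrableOn_Ioi 0 two_pos).congr_fun (fun x hx => ?_) measurableSet_Ioi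
    rw [abs_of_pos hx]
  have h2 : IntegrableOn (fun v : ℝ => Real.exp (-2 * |v|)) (Iic 0) := by
    rw [← Measure.map_neg_eq_self (volume : Measure ℝ)]
    let m : MeasurableEmbedding fun x : ℝ => -x := (Homeomorph.neg ℝ).measurableEmbedding
    rw [m.integrableOn_map_iff]
    simp_rw [Function.comp_def, abs_neg, neg_preimage, neg_Iic, neg_zero]
    exact (integrableOn_Ici_iff_integrableOn_Ioi (by finiteness)).mpr h1
  have := h2.union h1
  rwa [Iic_union_Ioi, integrableOn_univ] at this

lemma integral_cexp_Ioi {c : ℂ} (hc : c.re < 0) :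
    ∫ v in Ioi (0:ℝ), Complex.exp (c * v) = -c⁻¹ := by
  have hc0 : c ≠ 0 := fun h => by simp [h] at hc
  have hderiv : ∀ x ∈ Ici (0:ℝ), HasDerivAt (fun x : ℝ => Complex.exp (c * x) / c)
      (Complex.exp (c * x)) x := by
    intro x _
    have h1 : HasDerivAt (fun z : ℂ => Complex.exp (c * z) / c) (Complex.exp (c * x)) (x : ℂ) := by
      have := ((Complex.hasDerivAt_exp (c * x)).comp (x:ℂ)
        ((hasDerivAt_id (x:ℂ)).const_mul c)).div_const c
      refine this.congr_deriv ?_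
      simp [hc0]
    exact h1.comp_ofReal
  have hint : IntegrableOn (fun x : ℝ => Complex.exp (c * x)) (Ioi 0) := by
    refine Integrable.mono' (g := fun x => Real.exp (c.re * x)) ?_ ?_ ?_
    · have : IntegrableOn (fun x : ℝ => Real.exp (-(-c.re) * x)) (Ioi 0) :=
        exp_neg_integrableOn_Ioi 0 (by linarith)
      exact (by simpa using this : IntegrableOn (fun x : ℝ => Real.exp (c.re * x)) (Ioi 0))
    · exact (Complex.continuous_exp.comp
        (continuous_const.mul Complex.continuous_ofReal)).aestronglyMeasurable
    · filter_upwards with x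
      rw [Complex.norm_exp]
      simp
  have htend : Tendsto (fun x : ℝ => Complex.exp (c * x) / c) atTop (nhds 0) := by
    rw [tendsto_zero_iff_norm_tendsto_zero]
    have : Tendsto (fun x : ℝ => Real.exp (c.re * x) / ‖c‖) atTop (nhds 0) := by
      rw [show (0:ℝ) = 0 / ‖c‖ by simp]
      refine Tendsto.div_const ?_ _
      exact Real.tendsto_exp_atBot.comp (tendsto_id.const_mul_atTop_of_neg hc)
    refine this.congr fun x => ?_
    rw [norm_div, Complex.norm_exp]
    simp
  have := integral_Ioi_of_hasDerivAt_of_tendsto' hderiv hint htend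
  rw [this]
  simp [Complex.exp_zero]

lemma integrable_osc (u : ℝ) :
    Integrable (fun v : ℝ => Complex.exp (Complex.I * u * v) * (Real.exp (-2 * |v|) : ℂ)) := by
  refine Integrable.mono' (g := fun v => Real.exp (-2 * |v|)) integrable_exp_neg_two_abs ?_ ?_
  · apply Continuous.aestronglyMeasurable
    continuity
  · filter_upwards with v
    rw [norm_mul]
    have h1 : ‖Complex.exp (Complex.I * u * v)‖ = 1 := by
      rw [Complex.norm_exp]; simp
    have h2 : ‖((Real.exp (-2 * |v|) : ℝ) : ℂ)‖ = Real.exp (-2 * |v|) := by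
      rw [Complex.norm_of_nonneg (Real.exp_nonneg _)]
    rw [h1, h2, one_mul]

lemma integral_osc (u : ℝ) :
    ∫ v : ℝ, Complex.exp (Complex.I * u * v) * (Real.exp (-2 * |v|) : ℂ) = ((Wt u : ℝ) : ℂ) := by
  have key : ∀ v : ℝ, 0 ≤ v →
      Complex.exp (Complex.I * u * v) * (Real.exp (-2 * |v|) : ℂ)
        = Complex.exp ((Complex.I * u - 2) * v) := by
    intro v hv
    rw [_root_.abs_of_nonneg hv, Complex.ofReal_exp, ← Complex.exp_add]
    push_cast
    ring_nf
  have key2 : ∀ v : ℝ, v ≤ 0 →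
      Complex.exp (Complex.I * u * v) * (Real.exp (-2 * |v|) : ℂ)
        = Complex.exp ((Complex.I * u + 2) * v) := by
    intro v hv
    rw [_root_.abs_of_nonpos hv, Complex.ofReal_exp, ← Complex.exp_add]
    push_cast
    ring_nf
  have hsplit := intervalIntegral.integral_Iic_add_Ioi (b := (0:ℝ))
    ((integrable_osc u).integrableOn) ((integrable_osc u).integrableOn)
  rw [← hsplit]
  have hIoi : ∫ v in Ioi (0:ℝ), Complex.exp (Complex.I * u * v) * (Real.exp (-2 * |v|) : ℂ)
      = (2 - Complex.I * u)⁻¹ := by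
    rw [setIntegral_congr_fun measurableSet_Ioi (fun v hv => key v (le_of_lt hv)),
      integral_cexp_Ioi (by simp : ((Complex.I : ℂ) * u - 2).re < 0)]
    rw [← inv_neg]
    ring_nf
  have hIic : ∫ v in Iic (0:ℝ), Complex.exp (Complex.I * u * v) * (Real.exp (-2 * |v|) : ℂ)
      = (2 + Complex.I * u)⁻¹ := by
    rw [setIntegral_congr_fun measurableSet_Iic (fun v hv => key2 v hv)]
    have : ∫ v in Iic (0:ℝ), Complex.exp ((Complex.I * u + 2) * v)
        = ∫ v in Ioi (-(0:ℝ)), Complex.exp (-(Complex.I * u + 2) * v) := by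
      rw [← integral_comp_neg_Iic]
      congr 1
      ext v
      push_cast
      ring_nf
    rw [this, neg_zero, integral_cexp_Ioi (by simp : (-((Complex.I:ℂ) * u + 2)).re < 0)]
    rw [show (-((Complex.I:ℂ) * u + 2)) = -(2 + Complex.I * u) by ring, inv_neg, neg_neg]
  rw [hIoi, hIic]
  have h1 : (2 + Complex.I * (u:ℂ)) ≠ 0 := by
    intro h
    have := congrArg Complex.re h
    simp at this
  have h2 : (2 - Complex.I * (u:ℂ)) ≠ 0 := by
    intro h
    have := congrArg Complex.re h
    simp at this
  have h3 : ((4:ℂ) + (u:ℂ)^2) ≠ 0 := by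
    intro h
    have h' : ((4 + u^2 : ℝ) : ℂ) = 0 := by push_cast; linear_combination h
    have : (4 + u^2 : ℝ) = 0 := by exact_mod_cast h'
    nlinarith [sq_nonneg u]
  rw [Wt]
  push_cast
  field_simp
  ring_nf
  simp [Complex.I_sq]

lemma zmult_ne_zero_imp {q : ℕ} [NeZero q] (χ : DirichletCharacter ℂ q) {γ : ℝ}
    (h : zmult χ γ ≠ 0) :
    DirichletCharacter.LFunction χ (1 / 2 + γ * Complex.I) = 0 := by
  rw [zmult, dif_neg (NeZero.ne q)] at h
  split_ifs at h with ha
  · by_contra hL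
    have h0 : analyticOrderAt (DirichletCharacter.LFunction χ) (1 / 2 + γ * Complex.I) = (0 : ℕ) := by
      rw [Nat.cast_zero]; exact analyticOrderAt_eq_zero.mpr (Or.inr hL)
    rw [show ((0:ℕ):ℕ∞) = 0 from rfl] at h0
    exact h (by rw [h0]; rfl)
  · exact absurd rfl h

lemma finite_zeros {q : ℕ} [NeZero q] (χ : DirichletCharacter ℂ q) (T : ℝ) :
    {γ : ℝ | |γ| ≤ T ∧ zmult χ γ ≠ 0}.Finite := by
  set L := DirichletCharacter.LFunction χ with hLdef
  set g : ℝ → ℂ := fun γ => L (1 / 2 + γ * Complex.I) with hgdef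
  have hne1 : ∀ γ : ℝ, (1 / 2 + (γ:ℂ) * Complex.I) ≠ 1 := by
    intro γ h
    have := congrArg Complex.re h
    simp at this
  set S := {γ : ℝ | γ ∈ Icc (-T) T ∧ g γ = 0} with hSdef
  have hsub : {γ : ℝ | |γ| ≤ T ∧ zmult χ γ ≠ 0} ⊆ S := by
    rintro γ ⟨h1, h2⟩
    exact ⟨abs_le.mp h1, zmult_ne_zero_imp χ h2⟩
  refine Set.Finite.subset ?_ hsub
  have hana : AnalyticOnNhd ℂ L {(1:ℂ)}ᶜ :=
    DifferentiableOn.analyticOnNhd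
      (fun s hs => (DirichletCharacter.differentiableAt_LFunction χ s
        (Or.inl hs)).differentiableWithinAt)
      isOpen_compl_singleton
  have hcontg : Continuous g := by
    rw [continuous_iff_continuousAt]
    intro γ
    have h1 : ContinuousAt L (1 / 2 + γ * Complex.I) :=
      (DirichletCharacter.differentiableAt_LFunction χ _ (Or.inl (hne1 γ))).continuousAt
    have h2 : ContinuousAt (fun γ : ℝ => 1 / 2 + (γ:ℂ) * Complex.I) γ := by fun_prop
    exact ContinuousAt.comp (x := γ) h1 h2
  have hSclosed : IsClosed S := by
    have : S = Icc (-T) T ∩ g ⁻¹' {0} := by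
      ext γ; simp [hSdef]
    rw [this]
    exact isClosed_Icc.inter (isClosed_singleton.preimage hcontg)
  have hScompact : IsCompact S :=
    isCompact_Icc.of_isClosed_subset hSclosed (fun γ h => h.1)
  have hU : IsPreconnected ({(1:ℂ)}ᶜ : Set ℂ) :=
    (isConnected_compl_singleton_of_one_lt_rank
      (by rw [Complex.rank_real_complex]; norm_num) 1).isPreconnected
  have hL2 : L 2 ≠ 0 :=
    DirichletCharacter.LFunction_ne_zero_of_one_le_re χ (Or.inr (by norm_num)) (by norm_num)
  have hdisc : ∀ γ₀ ∈ S, ∀ᶠ γ in nhdsWithin γ₀ {γ₀}ᶜ, g γ ≠ 0 := by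
    intro γ₀ _
    have hana0 : AnalyticAt ℂ L (1 / 2 + γ₀ * Complex.I) := hana _ (hne1 γ₀)
    rcases hana0.eventually_eq_zero_or_eventually_ne_zero with hcase | hcase
    · exfalso
      have hfreq : ∃ᶠ s in nhdsWithin (1 / 2 + γ₀ * Complex.I) {(1 / 2 + γ₀ * Complex.I)}ᶜ,
          L s = 0 :=
        ((hcase.filter_mono nhdsWithin_le_nhds).frequently)
      have heq := hana.eqOn_zero_of_preconnected_of_frequently_eq_zero hU (hne1 γ₀) hfreq
      exact hL2 (heq (show (2:ℂ) ∈ _ by norm_num))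
    · have hmap : Tendsto (fun γ : ℝ => 1 / 2 + (γ:ℂ) * Complex.I)
          (nhdsWithin γ₀ {γ₀}ᶜ)
          (nhdsWithin (1 / 2 + γ₀ * Complex.I) {(1 / 2 + γ₀ * Complex.I)}ᶜ) := by
        apply ContinuousWithinAt.tendsto_nhdsWithin
        · exact (Continuous.continuousWithinAt (by fun_prop))
        · intro γ hγ hmem
          apply hγ
          have : (γ:ℂ) * Complex.I = (γ₀:ℂ) * Complex.I := by
            have := hmem
            simp only [Set.mem_singleton_iff] at this
            linear_combination this
          have h2 : (γ:ℂ) = γ₀ := by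
            field_simp [Complex.I_ne_zero] at this
            exact_mod_cast this
          exact Set.mem_singleton_iff.mpr (by exact_mod_cast h2)
      exact hmap.eventually hcase
  refine hScompact.finite ?_
  rw [isDiscrete_iff_discreteTopology, discreteTopology_subtype_iff]
  intro γ₀ hγ₀
  rw [← Filter.empty_mem_iff_bot]
  have hA : {γ : ℝ | g γ ≠ 0} ∈ nhdsWithin γ₀ {γ₀}ᶜ ⊓ Filter.principal S :=
    Filter.mem_inf_of_left (hdisc γ₀ hγ₀)
  have hB : S ∈ nhdsWithin γ₀ {γ₀}ᶜ ⊓ Filter.principal S :=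
    Filter.mem_inf_of_right (Filter.mem_principal_self S)
  have h3 := Filter.inter_mem hA hB
  have he : {γ : ℝ | g γ ≠ 0} ∩ S = ∅ := by
    ext γ
    simp only [Set.mem_inter_iff, Set.mem_setOf_eq, Set.mem_empty_iff_false, iff_false, not_and]
    exact fun hg hS => absurd hS.2 hg
  rwa [he] at h3

lemma cpow_mul_conj {x : ℝ} (hx : 0 < x) (γ₁ γ₂ : ℝ) :
    (x:ℂ) ^ (Complex.I * (γ₁:ℂ)) * (starRingEnd ℂ) ((x:ℂ) ^ (Complex.I * (γ₂:ℂ)))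
      = (x:ℂ) ^ (Complex.I * ((γ₁ - γ₂ : ℝ):ℂ)) := by
  have hxne : (x:ℂ) ≠ 0 := Complex.ofReal_ne_zero.mpr hx.ne'
  rw [Complex.cpow_def_of_ne_zero hxne, Complex.cpow_def_of_ne_zero hxne,
    Complex.cpow_def_of_ne_zero hxne, ← Complex.exp_conj, ← Complex.exp_add]
  congr 1
  rw [← Complex.ofReal_log hx.le]
  push_cast
  simp only [map_mul, Complex.conj_I, Complex.conj_ofReal]
  ring

lemma exp_mul_conj (v γ₁ γ₂ : ℝ) :
    Complex.exp (Complex.I * v * γ₁) * (starRingEnd ℂ) (Complex.exp (Complex.I * v * γ₂))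
      = Complex.exp (Complex.I * ((γ₁ - γ₂ : ℝ):ℂ) * v) := by
  rw [← Complex.exp_conj, ← Complex.exp_add]
  congr 1
  push_cast
  simp only [map_mul, Complex.conj_I, Complex.conj_ofReal]
  ring

set_option maxHeartbeats 1000000 in
/-- Theorem: under GRH, `F_q(x,T) = ∫_{-∞}^{∞} |Σ(x,T,v)|² e^{-2|v|} dv`; in
particular `F_q(x,T)` is real and nonnegative. -/
theorem statement15 (hGRH : GRH) :
    ∀ q : ℕ, 1 ≤ q → ∀ a : ℕ, Nat.gcd a q = 1 →
      ∀ x : ℝ, 1 ≤ x → ∀ T : ℝ, 0 ≤ T →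
      Fq q a x T =
          ((∫ v : ℝ, ‖Sig q a x T v‖ ^ 2 * Real.exp (-2 * |v|) : ℝ) : ℂ) ∧
        (Fq q a x T).im = 0 ∧ 0 ≤ (Fq q a x T).re := by
  intro q hq1 a ha x hx T hT
  have hq : q ≠ 0 := by omega
  haveI : NeZero q := ⟨hq⟩
  letI instF : Fintype (DirichletCharacter ℂ q) := Fintype.ofFinite _
  have hx0 : (0:ℝ) < x := lt_of_lt_of_le one_pos hx
  set Zf : DirichletCharacter ℂ q → Finset ℝ := fun χ => (finite_zeros χ T).toFinset with hZf
  have hmemZ : ∀ (χ : DirichletCharacter ℂ q) (γ : ℝ),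
      γ ∈ Zf χ ↔ (|γ| ≤ T ∧ zmult χ γ ≠ 0) := by
    intro χ γ
    rw [hZf]
    exact Set.Finite.mem_toFinset _
  set C : ((_ : DirichletCharacter ℂ q) × ℝ) → ℂ :=
    fun p => (starRingEnd ℂ) (p.1 (a : ZMod q)) * ((zmult p.1 p.2 : ℕ) : ℂ) *
      (x:ℂ) ^ (Complex.I * (p.2:ℂ)) with hC
  set P : Finset ((_ : DirichletCharacter ℂ q) × ℝ) := Finset.univ.sigma (fun χ => Zf χ) with hP
  -- Sig as a finite sum
  have hSig : ∀ v : ℝ, Sig q a x T v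
      = ∑ p ∈ P, C p * Complex.exp (Complex.I * (v:ℂ) * (p.2:ℂ)) := by
    intro v
    rw [Sig, dif_neg hq, hP, Finset.sum_sigma]
    apply Finset.sum_congr rfl
    intro χ _
    have htsum : (∑' γ : ℝ, if |γ| ≤ T then
          ((zmult χ γ : ℕ) : ℂ) * (x:ℂ) ^ (Complex.I * (γ:ℂ)) *
            Complex.exp (Complex.I * (v:ℂ) * (γ:ℂ)) else 0)
        = ∑ γ ∈ Zf χ, ((zmult χ γ : ℕ):ℂ) * (x:ℂ) ^ (Complex.I * (γ:ℂ)) *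
            Complex.exp (Complex.I * (v:ℂ) * (γ:ℂ)) := by
      rw [tsum_eq_sum (s := Zf χ) ?_]
      · exact Finset.sum_congr rfl fun γ hγ => if_pos ((hmemZ χ γ).mp hγ).1
      · intro γ hγ
        by_cases hT' : |γ| ≤ T
        · have hz : zmult χ γ = 0 := by
            by_contra hz; exact hγ ((hmemZ χ γ).mpr ⟨hT', hz⟩)
          simp [hT', hz]
        · simp [hT']
    rw [htsum, Finset.mul_sum]
    apply Finset.sum_congr rfl
    intro γ _
    rw [hC]
    ring
  -- Gpair as a finite sum
  have hG : ∀ χ₁ χ₂ : DirichletCharacter ℂ q, Gpair χ₁ χ₂ x T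
      = ∑ γ₁ ∈ Zf χ₁, ∑ γ₂ ∈ Zf χ₂,
          ((zmult χ₁ γ₁ : ℕ) : ℂ) * ((zmult χ₂ γ₂ : ℕ) : ℂ) *
            (x:ℂ) ^ (Complex.I * ((γ₁ - γ₂ : ℝ):ℂ)) * ((Wt (γ₁ - γ₂) : ℝ) : ℂ) := by
    intro χ₁ χ₂
    rw [Gpair, tsum_eq_sum (s := (Zf χ₁) ×ˢ (Zf χ₂)) ?_]
    · rw [Finset.sum_product]
      apply Finset.sum_congr rfl
      intro γ₁ hγ₁
      apply Finset.sum_congr rfl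
      intro γ₂ hγ₂
      rw [if_pos ⟨((hmemZ χ₁ γ₁).mp hγ₁).1, ((hmemZ χ₂ γ₂).mp hγ₂).1⟩]
      push_cast
      ring
    · intro p hp
      by_cases hT' : |p.1| ≤ T ∧ |p.2| ≤ T
      · have : zmult χ₁ p.1 = 0 ∨ zmult χ₂ p.2 = 0 := by
          by_contra hz
          push_neg at hz
          exact hp (Finset.mem_product.mpr
            ⟨(hmemZ χ₁ p.1).mpr ⟨hT'.1, hz.1⟩, (hmemZ χ₂ p.2).mpr ⟨hT'.2, hz.2⟩⟩)
        rcases this with h | h <;> simp [hT', h]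
      · simp [hT']
  -- Fq as a finite double sum
  have hFq : Fq q a x T = ∑ p ∈ P, ∑ p' ∈ P,
      C p * (starRingEnd ℂ) (C p') * ((Wt (p.2 - p'.2) : ℝ) : ℂ) := by
    rw [Fq, dif_neg hq, hP, Finset.sum_sigma]
    apply Finset.sum_congr rfl
    intro χ₁ _
    have step1 : ∀ χ₂ : DirichletCharacter ℂ q,
        (starRingEnd ℂ) (χ₁ (a : ZMod q)) * χ₂ (a : ZMod q) * Gpair χ₁ χ₂ x T
        = ∑ γ₁ ∈ Zf χ₁, ∑ γ₂ ∈ Zf χ₂,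
            C ⟨χ₁, γ₁⟩ * (starRingEnd ℂ) (C ⟨χ₂, γ₂⟩) * ((Wt (γ₁ - γ₂) : ℝ) : ℂ) := by
      intro χ₂
      rw [hG χ₁ χ₂, Finset.mul_sum]
      apply Finset.sum_congr rfl
      intro γ₁ _
      rw [Finset.mul_sum]
      apply Finset.sum_congr rfl
      intro γ₂ _
      rw [hC]
      simp only [map_mul, Complex.conj_conj, map_natCast]
      rw [← cpow_mul_conj hx0 γ₁ γ₂]
      ring
    calc (∑ χ₂ : DirichletCharacter ℂ q,
            (starRingEnd ℂ) (χ₁ (a : ZMod q)) * χ₂ (a : ZMod q) * Gpair χ₁ χ₂ x T)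
        = ∑ χ₂ : DirichletCharacter ℂ q, ∑ γ₁ ∈ Zf χ₁, ∑ γ₂ ∈ Zf χ₂,
            C ⟨χ₁, γ₁⟩ * (starRingEnd ℂ) (C ⟨χ₂, γ₂⟩) * ((Wt (γ₁ - γ₂) : ℝ) : ℂ) :=
          Finset.sum_congr rfl fun χ₂ _ => step1 χ₂
      _ = ∑ γ₁ ∈ Zf χ₁, ∑ χ₂ : DirichletCharacter ℂ q, ∑ γ₂ ∈ Zf χ₂,
            C ⟨χ₁, γ₁⟩ * (starRingEnd ℂ) (C ⟨χ₂, γ₂⟩) * ((Wt (γ₁ - γ₂) : ℝ) : ℂ) :=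
          Finset.sum_comm
      _ = ∑ γ₁ ∈ Zf χ₁, ∑ p' ∈ P,
            C ⟨χ₁, γ₁⟩ * (starRingEnd ℂ) (C p') * ((Wt (γ₁ - p'.2) : ℝ) : ℂ) :=
          by
            apply Finset.sum_congr rfl
            intro γ₁ _
            rw [hP, Finset.sum_sigma]
  -- the complex integral
  have hintg : ∀ p p' : ((_ : DirichletCharacter ℂ q) × ℝ),
      Integrable (fun v : ℝ => (C p * (starRingEnd ℂ) (C p')) *
        (Complex.exp (Complex.I * ((p.2 - p'.2 : ℝ):ℂ) * (v:ℂ)) *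
          ((Real.exp (-2 * |v|) : ℝ) : ℂ))) :=
    fun p p' => (integrable_osc (p.2 - p'.2)).const_mul _
  have hprod : ∀ v : ℝ,
      Sig q a x T v * (starRingEnd ℂ) (Sig q a x T v) * ((Real.exp (-2 * |v|) : ℝ) : ℂ)
      = ∑ p ∈ P, ∑ p' ∈ P, (C p * (starRingEnd ℂ) (C p')) *
          (Complex.exp (Complex.I * ((p.2 - p'.2 : ℝ):ℂ) * (v:ℂ)) *
            ((Real.exp (-2 * |v|) : ℝ) : ℂ)) := by
    intro v
    rw [hSig v, map_sum, Finset.sum_mul_sum, Finset.sum_mul]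
    apply Finset.sum_congr rfl
    intro p _
    rw [Finset.sum_mul]
    apply Finset.sum_congr rfl
    intro p' _
    rw [map_mul]
    have hexp := exp_mul_conj v p.2 p'.2
    linear_combination (C p * (starRingEnd ℂ) (C p') * ((Real.exp (-2 * |v|) : ℝ) : ℂ)) * hexp
  have hRHS : ((∫ v : ℝ, ‖Sig q a x T v‖ ^ 2 * Real.exp (-2 * |v|) : ℝ) : ℂ)
      = ∑ p ∈ P, ∑ p' ∈ P,
          (C p * (starRingEnd ℂ) (C p')) * ((Wt (p.2 - p'.2) : ℝ) : ℂ) := by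
    have hco : (∫ v : ℝ, ((‖Sig q a x T v‖ ^ 2 * Real.exp (-2 * |v|) : ℝ) : ℂ))
        = ((∫ v : ℝ, ‖Sig q a x T v‖ ^ 2 * Real.exp (-2 * |v|) : ℝ) : ℂ) :=
      integral_ofReal
    rw [← hco]
    have hpt : (fun v : ℝ => ((‖Sig q a x T v‖ ^ 2 * Real.exp (-2 * |v|) : ℝ) : ℂ))
        = fun v : ℝ => ∑ p ∈ P, ∑ p' ∈ P, (C p * (starRingEnd ℂ) (C p')) *
            (Complex.exp (Complex.I * ((p.2 - p'.2 : ℝ):ℂ) * (v:ℂ)) *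
              ((Real.exp (-2 * |v|) : ℝ) : ℂ)) := by
      funext v
      rw [Complex.ofReal_mul, ← hprod v, Complex.mul_conj, ← Complex.sq_norm]
    rw [hpt, integral_finset_sum _ (fun p _ => integrable_finset_sum _ (fun p' _ => hintg p p'))]
    apply Finset.sum_congr rfl
    intro p _
    rw [integral_finset_sum _ (fun p' _ => hintg p p')]
    apply Finset.sum_congr rfl
    intro p' _
    rw [MeasureTheory.integral_const_mul, integral_osc]
  have hmain : Fq q a x T
      = ((∫ v : ℝ, ‖Sig q a x T v‖ ^ 2 * Real.exp (-2 * |v|) : ℝ) : ℂ) := by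
    rw [hFq, hRHS]
  refine ⟨hmain, by rw [hmain]; exact Complex.ofReal_im _, ?_⟩
  rw [hmain, Complex.ofReal_re]
  apply integral_nonneg
  intro v
  exact mul_nonneg (pow_nonneg (norm_nonneg _) 2) (Real.exp_nonneg _)
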